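/- Let I ⊂ K[x,y] be a convex monomial ideal of height 2 with minimal monomial generators u_1 > … > u_m. Then for all k ≥ 1: (a) I^k = Σ_{i=1}^{m−1} (u_i, u_{i+1})^k; (b)(i) G((u_i, u_{i+1})^k) = {u_i^ℓ u_{i+1}^{k−ℓ} : ℓ = 0, …, k}; (b)(ii) G(I^k) = ⋃_{i=1}^{m−1} G((u_i, u_{i+1})^k); (b)(iii) for 1 ≤ i < j ≤ m−1, G((u_i, u_{i+1})^k) ∩ G((u_j, u_{j+1})^k) = ∅ if j ≠ i+1, and = {u_{i+1}^k} if j = i+1; (c) μ(I^k) = (m−1)k + 1 for all k ≥ 0. -/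

import Mathlib

open MvPolynomial

noncomputable section

/-- The minimal number of generators `μ(J)` of an ideal `J`. -/
def muGen {R : Type*} [CommSemiring R] (J : Ideal R) : ℕ :=
  sInf {n : ℕ | ∃ T : Finset R, T.card = n ∧ Ideal.span (T : Set R) = J}

/-- The set `{u i ^ ℓ * u (i+1) ^ (k - ℓ) : ℓ = 0, …, k}` where
`u i = x^(a i) * y^(b i)`. -/
def pairPows (K : Type) [Field K] (a b : ℕ → ℕ) (i k : ℕ) :
    Set (MvPolynomial (Fin 2) K) :=
  {w | ∃ l, l ≤ k ∧
    w = (X 0 ^ a i * X 1 ^ b i) ^ l * (X 0 ^ a (i + 1) * X 1 ^ b (i + 1)) ^ (k - l)}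

namespace P27


def ee (p q : ℕ) : Fin 2 →₀ ℕ := Finsupp.single 0 p + Finsupp.single 1 q

@[simp] lemma ee_apply0 (p q : ℕ) : ee p q 0 = p := by simp [ee]
@[simp] lemma ee_apply1 (p q : ℕ) : ee p q 1 = q := by simp [ee]

lemma ee_le {p q r s : ℕ} : ee p q ≤ ee r s ↔ p ≤ r ∧ q ≤ s := by
  constructor
  · intro h
    exact ⟨by simpa using h 0, by simpa using h 1⟩
  · intro ⟨h1, h2⟩ i
    fin_cases i <;> simpa

lemma ee_eq {p q r s : ℕ} : ee p q = ee r s ↔ p = r ∧ q = s := by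
  constructor
  · intro h
    constructor
    · have := congrArg (fun f : Fin 2 →₀ ℕ => f 0) h; simpa using this
    · have := congrArg (fun f : Fin 2 →₀ ℕ => f 1) h; simpa using this
  · rintro ⟨rfl, rfl⟩; rfl

lemma ee_add (p q r s : ℕ) : ee p q + ee r s = ee (p + r) (q + s) := by
  ext i; fin_cases i <;> simp

lemma le_ee {d : Fin 2 →₀ ℕ} {p q : ℕ} : d ≤ ee p q ↔ d 0 ≤ p ∧ d 1 ≤ q := by
  constructor
  · intro h; exact ⟨by simpa using h 0, by simpa using h 1⟩
  · intro ⟨h1, h2⟩ i; fin_cases i <;> simpa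

def M (K : Type) [Field K] (p q : ℕ) : MvPolynomial (Fin 2) K := monomial (ee p q) 1

variable {K : Type} [Field K]

lemma X_eq (p q : ℕ) : (X 0 ^ p * X 1 ^ q : MvPolynomial (Fin 2) K) = M K p q := by
  rw [X_pow_eq_monomial, X_pow_eq_monomial, monomial_mul, mul_one]; rfl

lemma M_mul (p q r s : ℕ) : M K p q * M K r s = M K (p + r) (q + s) := by
  rw [M, M, M, monomial_mul, mul_one, ee_add]

@[simp] lemma M_zero : M K 0 0 = 1 := by
  have : ee 0 0 = 0 := by ext i; fin_cases i <;> simp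
  rw [M, this, monomial_zero', C_1]

lemma M_pow (p q n : ℕ) : M K p q ^ n = M K (n * p) (n * q) := by
  induction n with
  | zero => simp
  | succ n ih => rw [pow_succ, ih, M_mul]; ring_nf

lemma M_eq_iff {p q r s : ℕ} : M K p q = M K r s ↔ p = r ∧ q = s := by
  rw [M, M, monomial_eq_monomial_iff]
  simp [ee_eq, one_ne_zero]

lemma support_M (p q : ℕ) : (M K p q).support = {ee p q} := by
  classical
  rw [M, support_monomial, if_neg one_ne_zero]

lemma M_inj : Function.Injective (fun pq : ℕ × ℕ => M K pq.1 pq.2) := by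
  rintro ⟨p, q⟩ ⟨r, s⟩ h
  simp only at h
  rw [M_eq_iff] at h
  exact Prod.ext h.1 h.2

/-- membership of a polynomial in a monomial ideal indexed by pairs -/
lemma mem_span_M {x : MvPolynomial (Fin 2) K} {s : Set (ℕ × ℕ)} :
    x ∈ Ideal.span ((fun pq : ℕ × ℕ => M K pq.1 pq.2) '' s) ↔
      ∀ d ∈ x.support, ∃ pq ∈ s, pq.1 ≤ d 0 ∧ pq.2 ≤ d 1 := by
  have himg : (fun pq : ℕ × ℕ => M K pq.1 pq.2) '' s
      = (fun e => monomial e (1 : K)) '' ((fun pq : ℕ × ℕ => ee pq.1 pq.2) '' s) := by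
    rw [Set.image_image]; rfl
  rw [himg, mem_ideal_span_monomial_image]
  constructor
  · intro h d hd
    obtain ⟨si, hsi, hle⟩ := h d hd
    obtain ⟨pq, hpq, rfl⟩ := hsi
    exact ⟨pq, hpq, by simpa using hle 0, by simpa using hle 1⟩
  · intro h d hd
    obtain ⟨pq, hpq, h1, h2⟩ := h d hd
    refine ⟨ee pq.1 pq.2, ⟨pq, hpq, rfl⟩, ?_⟩
    intro i; fin_cases i <;> simpa

lemma M_mem_span_M {p q : ℕ} {s : Set (ℕ × ℕ)} :
    M K p q ∈ Ideal.span ((fun pq : ℕ × ℕ => M K pq.1 pq.2) '' s) ↔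
      ∃ pq ∈ s, pq.1 ≤ p ∧ pq.2 ≤ q := by
  rw [mem_span_M]
  constructor
  · intro h
    have := h (ee p q) (by rw [support_M]; simp)
    simpa using this
  · intro h d hd
    rw [support_M] at hd
    simp only [Finset.mem_singleton] at hd
    subst hd
    simpa using h




/-- strictly increasing linear interpolation -/
lemma xlin {A A' l l' k : ℕ} (hA : A' < A) (hll : l < l') (hl' : l' ≤ k) :
    l * A + (k - l) * A' < l' * A + (k - l') * A' := by
  obtain ⟨d, hd, rfl⟩ : ∃ d, 1 ≤ d ∧ l' = l + d := ⟨l' - l, by omega, by omega⟩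
  obtain ⟨e, rfl⟩ : ∃ e, k = l + d + e := ⟨k - (l + d), by omega⟩
  have h1 : l + d + e - l = d + e := by omega
  have h2 : l + d + e - (l + d) = e := by omega
  rw [h1, h2]
  have hdA : d * A' < d * A := Nat.mul_lt_mul_of_le_of_lt (le_refl d) hA (by omega)
  ring_nf
  nlinarith [hdA]

/-- strictly decreasing linear interpolation -/
lemma ylin {B B' l l' k : ℕ} (hB : B < B') (hll : l < l') (hl' : l' ≤ k) :
    l' * B + (k - l') * B' < l * B + (k - l) * B' := by
  obtain ⟨d, hd, rfl⟩ : ∃ d, 1 ≤ d ∧ l' = l + d := ⟨l' - l, by omega, by omega⟩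
  obtain ⟨e, rfl⟩ : ∃ e, k = l + d + e := ⟨k - (l + d), by omega⟩
  have h1 : l + d + e - l = d + e := by omega
  have h2 : l + d + e - (l + d) = e := by omega
  rw [h1, h2]
  have hdB : d * B < d * B' := Nat.mul_lt_mul_of_le_of_lt (le_refl d) hB (by omega)
  ring_nf
  nlinarith [hdB]

/-- value at `l = k`: `f l = k*A` forces `l = k` when `A' < A`. -/
lemma xlin_top {A A' l k : ℕ} (hA : A' < A) (hl : l ≤ k)
    (h : k * A ≤ l * A + (k - l) * A') : l = k := by
  by_contra hne
  have : l * A + (k - l) * A' < k * A + (k - k) * A' := xlin hA (by omega) (le_refl k)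
  simp only [Nat.sub_self, Nat.zero_mul, Nat.add_zero] at this
  omega

/-- value at `l = 0`: forces `l = 0` when `A' < A` (min is `k*A'`). -/
lemma xlin_bot {A A' l k : ℕ} (hA : A' < A) (hl : l ≤ k)
    (h : l * A + (k - l) * A' ≤ k * A') : l = 0 := by
  by_contra hne
  have : 0 * A + (k - 0) * A' < l * A + (k - l) * A' := xlin hA (by omega) hl
  simp only [Nat.zero_mul, Nat.sub_zero, Nat.zero_add] at this
  omega

/-- decreasing version: forces `l = 0` when value is the max `k*B'`. -/
lemma ylin_bot {B B' l k : ℕ} (hB : B < B') (hl : l ≤ k)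
    (h : k * B' ≤ l * B + (k - l) * B') : l = 0 := by
  by_contra hne
  have : l * B + (k - l) * B' < 0 * B + (k - 0) * B' := ylin hB (by omega) hl
  simp only [Nat.zero_mul, Nat.sub_zero, Nat.zero_add] at this
  omega

/-- decreasing version: forces `l = k` when value is the min `k*B`. -/
lemma ylin_top {B B' l k : ℕ} (hB : B < B') (hl : l ≤ k)
    (h : l * B + (k - l) * B' ≤ k * B) : l = k := by
  by_contra hne
  have : k * B + (k - k) * B' < l * B + (k - l) * B' := ylin hB (by omega) (le_refl k)
  simp only [Nat.sub_self, Nat.zero_mul, Nat.add_zero] at this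
  omega

lemma xlin_lb {A A' l k : ℕ} (hA : A' ≤ A) (hl : l ≤ k) :
    k * A' ≤ l * A + (k - l) * A' := by
  calc k * A' = l * A' + (k - l) * A' := by rw [← Nat.add_mul]; congr 1; omega
  _ ≤ l * A + (k - l) * A' := by
      have := Nat.mul_le_mul_left l hA; omega

lemma xlin_ub {A A' l k : ℕ} (hA : A' ≤ A) (hl : l ≤ k) :
    l * A + (k - l) * A' ≤ k * A := by
  calc l * A + (k - l) * A' ≤ l * A + (k - l) * A := by
        have := Nat.mul_le_mul_left (k - l) hA; omega
  _ = k * A := by rw [← Nat.add_mul]; congr 1; omega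


lemma ylin_lb {B B' l k : ℕ} (hB : B ≤ B') (hl : l ≤ k) :
    k * B ≤ l * B + (k - l) * B' := by
  calc k * B = l * B + (k - l) * B := by rw [← Nat.add_mul]; congr 1; omega
  _ ≤ l * B + (k - l) * B' := by
      have := Nat.mul_le_mul_left (k - l) hB; omega

lemma ylin_ub {B B' l k : ℕ} (hB : B ≤ B') (hl : l ≤ k) :
    l * B + (k - l) * B' ≤ k * B' := by
  calc l * B + (k - l) * B' ≤ l * B' + (k - l) * B' := by
        have := Nat.mul_le_mul_left l hB; omega
  _ = k * B' := by rw [← Nat.add_mul]; congr 1; omega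

section Master
variable {m : ℕ} {a b : ℕ → ℕ}

/-- Master comparison of exponent vectors of the pair-power generators. -/
lemma master (hm : 2 ≤ m)
    (hmono : ∀ i, 1 ≤ i → i + 1 ≤ m → a (i + 1) < a i ∧ b i < b (i + 1))
    (haij : ∀ i j, 1 ≤ i → i ≤ j → j ≤ m → a j + (j - i) ≤ a i)
    (hbij : ∀ i j, 1 ≤ i → i ≤ j → j ≤ m → b i + (j - i) ≤ b j)
    {k i l i' l' : ℕ} (hk : 1 ≤ k)
    (hi : 1 ≤ i) (hi2 : i + 1 ≤ m) (hi' : 1 ≤ i') (hi'2 : i' + 1 ≤ m)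
    (hl : l ≤ k) (hl' : l' ≤ k)
    (hX : l' * a i' + (k - l') * a (i' + 1) ≤ l * a i + (k - l) * a (i + 1))
    (hY : l' * b i' + (k - l') * b (i' + 1) ≤ l * b i + (k - l) * b (i + 1)) :
    (l * a i + (k - l) * a (i + 1) = l' * a i' + (k - l') * a (i' + 1) ∧
     l * b i + (k - l) * b (i + 1) = l' * b i' + (k - l') * b (i' + 1)) ∧
    (i = i' ∧ l = l' ∨ (i' = i + 1 ∧ l = 0 ∧ l' = k) ∨ (i = i' + 1 ∧ l = k ∧ l' = 0)) := by
  have hai : a (i + 1) < a i := (hmono i hi hi2).1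
  have hbi : b i < b (i + 1) := (hmono i hi hi2).2
  have hai' : a (i' + 1) < a i' := (hmono i' hi' hi'2).1
  have hbi' : b i' < b (i' + 1) := (hmono i' hi' hi'2).2
  rcases lt_trichotomy i i' with hii | rfl | hii
  · -- i < i' : Y ≤ k b (i+1) ≤ k b i' ≤ Y', combined with Y' ≤ Y
    have c1 : l * b i + (k - l) * b (i + 1) ≤ k * b (i + 1) :=
      ylin_ub (le_of_lt hbi) hl
    have c2 : k * b (i + 1) ≤ k * b i' :=
      Nat.mul_le_mul_left k (by have := hbij (i + 1) i' (by omega) (by omega) (by omega); omega)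
    have c3 : k * b i' ≤ l' * b i' + (k - l') * b (i' + 1) := ylin_lb (le_of_lt hbi') hl'
    have e1 : l * b i + (k - l) * b (i + 1) = k * b (i + 1) := by omega
    have e2 : k * b (i + 1) = k * b i' := by omega
    have e3 : k * b i' = l' * b i' + (k - l') * b (i' + 1) := by omega
    have hl0 : l = 0 := ylin_bot hbi hl (by omega)
    have hii' : i' = i + 1 := by
      by_contra hne
      have : b (i + 1) + (i' - (i + 1)) ≤ b i' := hbij (i + 1) i' (by omega) (by omega) (by omega)
      have hlt : b (i + 1) < b i' := by omega
      have : k * b (i + 1) < k * b i' := Nat.mul_lt_mul_of_le_of_lt (le_refl k) hlt (by omega)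
      omega
    have hl'k : l' = k := ylin_top hbi' hl' (by omega)
    subst hii' hl0 hl'k
    refine ⟨⟨?_, ?_⟩, Or.inr (Or.inl ⟨rfl, rfl, rfl⟩)⟩
    · simp only [Nat.zero_mul, Nat.sub_zero, Nat.zero_add, Nat.sub_self, Nat.add_zero]
    · simp only [Nat.zero_mul, Nat.sub_zero, Nat.zero_add, Nat.sub_self, Nat.add_zero]
  · -- i = i'
    rcases lt_trichotomy l l' with hll | rfl | hll
    · exfalso
      have := xlin hai hll hl'
      omega
    · exact ⟨⟨rfl, rfl⟩, Or.inl ⟨rfl, rfl⟩⟩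
    · exfalso
      have := ylin hbi hll hl
      omega
  · -- i' < i : X ≤ k a i ≤ k a (i'+1) ≤ X'
    have c1 : l * a i + (k - l) * a (i + 1) ≤ k * a i := xlin_ub (le_of_lt hai) hl
    have c2 : k * a i ≤ k * a (i' + 1) :=
      Nat.mul_le_mul_left k (by have := haij (i' + 1) i (by omega) (by omega) (by omega); omega)
    have c3 : k * a (i' + 1) ≤ l' * a i' + (k - l') * a (i' + 1) := xlin_lb (le_of_lt hai') hl'
    have e1 : l * a i + (k - l) * a (i + 1) = k * a i := by omega
    have e2 : k * a i = k * a (i' + 1) := by omega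
    have e3 : k * a (i' + 1) = l' * a i' + (k - l') * a (i' + 1) := by omega
    have hlk : l = k := xlin_top hai hl (by omega)
    have hieq : i = i' + 1 := by
      by_contra hne
      have : a i + (i - (i' + 1)) ≤ a (i' + 1) := haij (i' + 1) i (by omega) (by omega) (by omega)
      have hlt : a i < a (i' + 1) := by omega
      have : k * a i < k * a (i' + 1) := Nat.mul_lt_mul_of_le_of_lt (le_refl k) hlt (by omega)
      omega
    have hl'0 : l' = 0 := xlin_bot hai' hl' (by omega)
    subst hieq hlk hl'0
    refine ⟨⟨?_, ?_⟩, Or.inr (Or.inr ⟨rfl, rfl, rfl⟩)⟩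
    · simp only [Nat.zero_mul, Nat.sub_zero, Nat.zero_add, Nat.sub_self, Nat.add_zero]
    · simp only [Nat.zero_mul, Nat.sub_zero, Nat.zero_add, Nat.sub_self, Nat.add_zero]

end Master



lemma sum_upd2 {k : ℕ} (f : Fin k → ℕ) {t1 t2 : Fin k} (h : t1 ≠ t2) (v1 v2 : ℕ)
    (g : ℕ → ℕ) :
    (∑ t, g (Function.update (Function.update f t1 v1) t2 v2 t)) + g (f t1) + g (f t2)
      = (∑ t, g (f t)) + g v1 + g v2 := by
  classical
  have key : ∀ h : Fin k → ℕ,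
      ∑ t, g (h t) = (∑ t ∈ (Finset.univ.erase t1).erase t2, g (h t)) + g (h t2) + g (h t1) := by
    intro h'
    rw [Finset.sum_erase_add _ _ (Finset.mem_erase.mpr ⟨Ne.symm h, Finset.mem_univ t2⟩),
      Finset.sum_erase_add _ _ (Finset.mem_univ t1)]
  rw [key f, key (Function.update (Function.update f t1 v1) t2 v2)]
  have hsame : ∀ t ∈ (Finset.univ.erase t1).erase t2,
      g (Function.update (Function.update f t1 v1) t2 v2 t) = g (f t) := by
    intro t ht
    rw [Finset.mem_erase, Finset.mem_erase] at ht
    rw [Function.update_of_ne ht.1, Function.update_of_ne ht.2.1]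
  rw [Finset.sum_congr rfl hsame]
  rw [Function.update_self, Function.update_of_ne h, Function.update_self]
  ring

lemma sum_split {k i0 j0 : ℕ} (g : ℕ → ℕ) (f : Fin k → ℕ)
    (hlow : ∀ t, i0 ≤ f t) (hhigh : ∀ t, f t ≤ j0) (hcase : j0 ≤ i0 + 1) :
    ∑ t, g (f t) = (Finset.univ.filter (fun t => f t = i0)).card * g i0
      + (k - (Finset.univ.filter (fun t => f t = i0)).card) * g (i0 + 1) := by
  classical
  rw [← Finset.sum_filter_add_sum_filter_not Finset.univ (fun t => f t = i0)]
  have h1 : ∑ t ∈ Finset.univ.filter (fun t => f t = i0), g (f t)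
      = (Finset.univ.filter (fun t => f t = i0)).card * g i0 := by
    have hc : ∀ t ∈ Finset.univ.filter (fun t => f t = i0), g (f t) = g i0 := by
      intro t ht; rw [Finset.mem_filter] at ht; rw [ht.2]
    rw [Finset.sum_congr rfl hc, Finset.sum_const, smul_eq_mul]
  have h2 : ∑ t ∈ Finset.univ.filter (fun t => ¬ f t = i0), g (f t)
      = (k - (Finset.univ.filter (fun t => f t = i0)).card) * g (i0 + 1) := by
    have hc : ∀ t ∈ Finset.univ.filter (fun t => ¬ f t = i0), g (f t) = g (i0 + 1) := by
      intro t ht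
      rw [Finset.mem_filter] at ht
      have h3 := hlow t; have h4 := hhigh t
      have h5 : f t = i0 + 1 := by omega
      rw [h5]
    rw [Finset.sum_congr rfl hc, Finset.sum_const, smul_eq_mul]
    congr 1
    have := Finset.card_filter_add_card_filter_not (s := (Finset.univ : Finset (Fin k)))
      (p := fun t => f t = i0)
    simp only [Finset.card_univ, Fintype.card_fin] at this
    omega
  rw [h1, h2]

section Core
variable {m : ℕ} {a b : ℕ → ℕ}

/-- Core compression lemma: any product of `k` generators is dominated by a pair power. -/
lemma core (hm : 2 ≤ m) (ham : a m = 0)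
    (hcomp : ∀ i j, 1 ≤ i → i + 2 ≤ j → j ≤ m →
      a (i + 1) + a (j - 1) ≤ a i + a j ∧ b (i + 1) + b (j - 1) ≤ b i + b j)
    {k : ℕ} (hk : 1 ≤ k) :
    ∀ N (f : Fin k → ℕ), (∀ t, 1 ≤ f t ∧ f t ≤ m) → (∑ t, (f t) ^ 2) ≤ N →
      ∃ j l, 1 ≤ j ∧ j + 1 ≤ m ∧ l ≤ k ∧
        l * a j + (k - l) * a (j + 1) ≤ ∑ t, a (f t) ∧
        l * b j + (k - l) * b (j + 1) ≤ ∑ t, b (f t) := by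
  intro N
  induction N using Nat.strong_induction_on with
  | _ N IH =>
    intro f hf hN
    classical
    haveI hne : Nonempty (Fin k) := ⟨⟨0, hk⟩⟩
    have hune : (Finset.univ : Finset (Fin k)).Nonempty := Finset.univ_nonempty
    obtain ⟨t1, -, ht1⟩ := Finset.exists_mem_eq_inf' hune f
    obtain ⟨t2, -, ht2⟩ := Finset.exists_mem_eq_sup' hune f
    set i0 := Finset.univ.inf' hune f with hi0
    set j0 := Finset.univ.sup' hune f with hj0
    have hlow : ∀ t, i0 ≤ f t := fun t => Finset.inf'_le f (Finset.mem_univ t)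
    have hhigh : ∀ t, f t ≤ j0 := fun t => Finset.le_sup' f (Finset.mem_univ t)
    have hi01 : 1 ≤ i0 := by rw [ht1]; exact (hf t1).1
    have hj0m : j0 ≤ m := by rw [ht2]; exact (hf t2).2
    by_cases hcase : j0 ≤ i0 + 1
    · -- all values in {i0, i0+1}
      by_cases him : i0 + 1 ≤ m
      · refine ⟨i0, (Finset.univ.filter (fun t => f t = i0)).card, hi01, him, ?_, ?_, ?_⟩
        · calc (Finset.univ.filter (fun t => f t = i0)).card
              ≤ (Finset.univ : Finset (Fin k)).card := Finset.card_filter_le _ _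
          _ = k := by simp
        · exact le_of_eq (sum_split a f hlow hhigh hcase).symm
        · exact le_of_eq (sum_split b f hlow hhigh hcase).symm
      · -- i0 = m, all values are m
        have hall : ∀ t, f t = m := fun t => by have := hlow t; have := (hf t).2; omega
        refine ⟨m - 1, 0, by omega, by omega, Nat.zero_le k, ?_, ?_⟩
        · have hm1 : m - 1 + 1 = m := by omega
          rw [hm1, ham]
          simp
        · have hm1 : m - 1 + 1 = m := by omega
          have : ∑ t, b (f t) = k * b m := by
            rw [Finset.sum_congr rfl (fun t _ => by rw [hall t])]
            simp [Finset.sum_const, mul_comm]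
          rw [hm1, this]
          simp
    · -- compression step
      have h2 : i0 + 2 ≤ j0 := by omega
      have ht12 : t1 ≠ t2 := by
        intro h; rw [h] at ht1; omega
      have hcmp := hcomp i0 j0 hi01 h2 hj0m
      have hsa := sum_upd2 f ht12 (i0 + 1) (j0 - 1) a
      have hsb := sum_upd2 f ht12 (i0 + 1) (j0 - 1) b
      have hsq := sum_upd2 f ht12 (i0 + 1) (j0 - 1) (· ^ 2)
      rw [← ht1, ← ht2] at hsa hsb hsq
      set f' := Function.update (Function.update f t1 (i0 + 1)) t2 (j0 - 1) with hf'
      have hmeas : (i0 + 1) ^ 2 + (j0 - 1) ^ 2 + 2 ≤ i0 ^ 2 + j0 ^ 2 := by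
        obtain ⟨c, hc1, hc2⟩ : ∃ c, j0 = c + 1 ∧ i0 + 1 ≤ c := ⟨j0 - 1, by omega, by omega⟩
        rw [hc1]
        simp only [Nat.add_sub_cancel]
        nlinarith [hc2]
      have hflt : (∑ t, (f' t) ^ 2) < N := by
        have h1 : (∑ t, (f' t) ^ 2) + 2 ≤ ∑ t, (f t) ^ 2 := by linarith [hsq, hmeas]
        omega
      have hf'range : ∀ t, 1 ≤ f' t ∧ f' t ≤ m := by
        intro t
        rcases eq_or_ne t t2 with rfl | h2'
        · rw [hf', Function.update_self]; omega
        · rcases eq_or_ne t t1 with rfl | h1'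
          · rw [hf', Function.update_of_ne ht12, Function.update_self]; omega
          · rw [hf', Function.update_of_ne h2', Function.update_of_ne h1']
            exact hf t
      obtain ⟨j, l, hj1, hj2, hl, hA, hB⟩ := IH _ hflt f' hf'range (le_refl _)
      refine ⟨j, l, hj1, hj2, hl, ?_, ?_⟩
      · have h6 : (∑ t, a (f' t)) ≤ ∑ t, a (f t) := by omega
        exact le_trans hA h6
      · have h6 : (∑ t, b (f' t)) ≤ ∑ t, b (f t) := by omega
        exact le_trans hB h6
end Core



def eP (a b : ℕ → ℕ) (k i l : ℕ) : ℕ × ℕ :=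
  (l * a i + (k - l) * a (i + 1), l * b i + (k - l) * b (i + 1))

def Pset (a b : ℕ → ℕ) (k i : ℕ) : Set (ℕ × ℕ) := {pq | ∃ l, l ≤ k ∧ pq = eP a b k i l}

lemma eP_zero_eq (a b : ℕ → ℕ) (k i : ℕ) : eP a b k i 0 = eP a b k (i + 1) k := by
  unfold eP
  simp [Nat.sub_self]

section Field
variable {K : Type} [Field K] {a b : ℕ → ℕ}

lemma pairPows_eq (a b : ℕ → ℕ) (i k : ℕ) :
    pairPows K a b i k = (fun pq : ℕ × ℕ => M K pq.1 pq.2) '' Pset a b k i := by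
  ext w
  simp only [pairPows, Set.mem_setOf_eq, Set.mem_image, Pset]
  constructor
  · rintro ⟨l, hl, rfl⟩
    exact ⟨eP a b k i l, ⟨l, hl, rfl⟩,
      by rw [X_eq, X_eq, M_pow, M_pow, M_mul]; rfl⟩
  · rintro ⟨pq, ⟨l, hl, rfl⟩, rfl⟩
    exact ⟨l, hl, by rw [X_eq, X_eq, M_pow, M_pow, M_mul]; rfl⟩

lemma prod_M {τ : Type*} (s : Finset τ) (p q : τ → ℕ) :
    ∏ t ∈ s, M K (p t) (q t) = M K (∑ t ∈ s, p t) (∑ t ∈ s, q t) := by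
  classical
  induction s using Finset.cons_induction with
  | empty => simp
  | cons t s ht ih => rw [Finset.prod_cons, ih, M_mul, Finset.sum_cons, Finset.sum_cons]

lemma spanPair_pow (a b : ℕ → ℕ) (i : ℕ) : ∀ k,
    (Ideal.span {(X 0 ^ a i * X 1 ^ b i : MvPolynomial (Fin 2) K),
      X 0 ^ a (i + 1) * X 1 ^ b (i + 1)}) ^ k = Ideal.span (pairPows K a b i k)
  | 0 => by
    rw [pow_zero, Ideal.one_eq_top]
    symm
    rw [Ideal.eq_top_iff_one]
    apply Ideal.subset_span
    exact ⟨0, Nat.zero_le 0, by simp⟩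
  | (k + 1) => by
    rw [pow_succ, spanPair_pow a b i k, Ideal.span_mul_span]
    apply le_antisymm
    · rw [Ideal.span_le]
      rintro w hw
      rw [Set.mem_mul] at hw
      obtain ⟨x, hx, y, hy, rfl⟩ := hw
      obtain ⟨l, hl, rfl⟩ := hx
      rcases hy with rfl | rfl
      · apply Ideal.subset_span
        refine ⟨l + 1, by omega, ?_⟩
        have h2 : k + 1 - (l + 1) = k - l := by omega
        rw [h2]; ring
      · apply Ideal.subset_span
        refine ⟨l, by omega, ?_⟩
        have h2 : k + 1 - l = (k - l) + 1 := by omega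
        rw [h2]; ring
    · rw [Ideal.span_le]
      rintro w ⟨l, hl, rfl⟩
      apply Ideal.subset_span
      rw [Set.mem_mul]
      rcases Nat.eq_zero_or_pos l with rfl | hpos
      · refine ⟨(X 0 ^ a i * X 1 ^ b i) ^ 0 * (X 0 ^ a (i + 1) * X 1 ^ b (i + 1)) ^ (k - 0),
          ⟨0, Nat.zero_le k, rfl⟩, X 0 ^ a (i + 1) * X 1 ^ b (i + 1),
          Set.mem_insert_of_mem _ rfl, ?_⟩
        rw [Nat.sub_zero, Nat.sub_zero, pow_succ]; ring
      · obtain ⟨l', rfl⟩ : ∃ l', l = l' + 1 := ⟨l - 1, by omega⟩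
        refine ⟨(X 0 ^ a i * X 1 ^ b i) ^ l' * (X 0 ^ a (i + 1) * X 1 ^ b (i + 1)) ^ (k - l'),
          ⟨l', by omega, rfl⟩, X 0 ^ a i * X 1 ^ b i, Set.mem_insert _ _, ?_⟩
        have h2 : k + 1 - (l' + 1) = k - l' := by omega
        rw [h2, pow_succ]; ring

/-- minimality of an antichain of monomials -/
lemma min_gen {s : Set (ℕ × ℕ)}
    (hanti : ∀ pq ∈ s, ∀ rs ∈ s, rs.1 ≤ pq.1 → rs.2 ≤ pq.2 → rs = pq)
    {v : MvPolynomial (Fin 2) K} (hv : v ∈ (fun pq : ℕ × ℕ => M K pq.1 pq.2) '' s) :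
    v ∉ Ideal.span (((fun pq : ℕ × ℕ => M K pq.1 pq.2) '' s) \ {v}) := by
  obtain ⟨pq, hpq, rfl⟩ := hv
  have himg : ((fun pq : ℕ × ℕ => M K pq.1 pq.2) '' s) \ {(fun pq : ℕ × ℕ => M K pq.1 pq.2) pq}
      = (fun pq : ℕ × ℕ => M K pq.1 pq.2) '' (s \ {pq}) := by
    rw [Set.image_diff M_inj, Set.image_singleton]
  rw [himg]
  intro hmem
  rw [M_mem_span_M] at hmem
  obtain ⟨rs, hrs, h1, h2⟩ := hmem
  exact hrs.2 (hanti pq hpq rs hrs.1 h1 h2)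

end Field


section LB
variable {K : Type} [Field K]

/-- key coefficient computation: for `t` in a monomial ideal whose generator exponents form an
antichain `G`, and `γ ∈ G`, the `γ` coefficient of `p * t`. -/
lemma coeff_key {G : Set (ℕ × ℕ)}
    (hanti : ∀ pq ∈ G, ∀ rs ∈ G, rs.1 ≤ pq.1 → rs.2 ≤ pq.2 → rs = pq)
    {t : MvPolynomial (Fin 2) K}
    (ht : t ∈ Ideal.span ((fun pq : ℕ × ℕ => M K pq.1 pq.2) '' G))
    (p : MvPolynomial (Fin 2) K) {γ : ℕ × ℕ} (hγ : γ ∈ G) :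
    coeff (ee γ.1 γ.2) (p * t) = constantCoeff p * coeff (ee γ.1 γ.2) t := by
  classical
  rw [coeff_mul]
  rw [Finset.sum_eq_single_of_mem ((0 : Fin 2 →₀ ℕ), ee γ.1 γ.2)
    (Finset.HasAntidiagonal.mem_antidiagonal.mpr (zero_add _))]
  · rw [constantCoeff_eq]
  · rintro ⟨d, e⟩ hde hne
    rw [Finset.HasAntidiagonal.mem_antidiagonal] at hde
    by_cases he : coeff e t = 0
    · simp [he]
    · exfalso
      have hes : e ∈ t.support := mem_support_iff.mpr he
      have := mem_span_M.mp ht e hes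
      obtain ⟨rs, hrs, h1, h2⟩ := this
      have he0 : e 0 ≤ γ.1 := by
        have := congrArg (fun f : Fin 2 →₀ ℕ => f 0) hde
        simp only [Finsupp.add_apply, ee_apply0] at this
        omega
      have he1 : e 1 ≤ γ.2 := by
        have := congrArg (fun f : Fin 2 →₀ ℕ => f 1) hde
        simp only [Finsupp.add_apply, ee_apply1] at this
        omega
      have hrsγ : rs = γ := hanti γ hγ rs hrs (le_trans h1 he0) (le_trans h2 he1)
      subst hrsγ
      have he0' : e 0 = rs.1 := le_antisymm he0 h1
      have he1' : e 1 = rs.2 := le_antisymm he1 h2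
      have heq : e = ee rs.1 rs.2 := by
        ext i; fin_cases i
        · simpa using he0'
        · simpa using he1'
      apply hne
      have hd : d = 0 := by
        rw [heq] at hde
        ext i
        have := congrArg (fun f : Fin 2 →₀ ℕ => f i) hde
        simp only [Finsupp.add_apply] at this
        simp only [Finsupp.coe_zero, Pi.zero_apply]
        omega
      rw [hd, heq]

/-- lower bound for the number of generators -/
lemma lower_bound (Gf : Finset (ℕ × ℕ))
    (hanti : ∀ pq ∈ (Gf : Set (ℕ × ℕ)), ∀ rs ∈ (Gf : Set (ℕ × ℕ)),
      rs.1 ≤ pq.1 → rs.2 ≤ pq.2 → rs = pq)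
    (T : Finset (MvPolynomial (Fin 2) K))
    (hT : Ideal.span (T : Set (MvPolynomial (Fin 2) K))
      = Ideal.span ((fun pq : ℕ × ℕ => M K pq.1 pq.2) '' (Gf : Set (ℕ × ℕ)))) :
    Gf.card ≤ T.card := by
  classical
  set J := Ideal.span ((fun pq : ℕ × ℕ => M K pq.1 pq.2) '' (Gf : Set (ℕ × ℕ))) with hJ
  -- the coefficient-extraction linear map
  set φ : MvPolynomial (Fin 2) K →ₗ[K] (↥(Gf : Set (ℕ × ℕ)) → K) :=
    LinearMap.pi (fun γ : ↥(Gf : Set (ℕ × ℕ)) => lcoeff K (ee (γ : ℕ × ℕ).1 (γ : ℕ × ℕ).2)) with hφ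
  have hTJ : ∀ t ∈ T, t ∈ J := by
    intro t htT
    rw [← hT]
    exact Ideal.subset_span htT
  -- each standard basis vector is in the span of φ '' T
  have key : ∀ γ : ↥(Gf : Set (ℕ × ℕ)), Pi.single γ (1 : K)
      ∈ Submodule.span K (φ '' (T : Set (MvPolynomial (Fin 2) K))) := by
    intro γ
    have hgJ : M K (γ : ℕ × ℕ).1 (γ : ℕ × ℕ).2 ∈ J := by
      apply Ideal.subset_span
      exact ⟨γ, γ.2, rfl⟩
    rw [← hT] at hgJ
    rw [← Ideal.submodule_span_eq, Submodule.mem_span_set] at hgJ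
    obtain ⟨c, hcsupp, hcsum⟩ := hgJ
    have hφg : φ (M K (γ : ℕ × ℕ).1 (γ : ℕ × ℕ).2) = Pi.single γ (1 : K) := by
      funext γ'
      simp only [hφ, LinearMap.pi_apply, lcoeff_apply, M, coeff_monomial]
      rw [Pi.single_apply]
      by_cases h : γ' = γ
      · subst h; simp
      · rw [if_neg h, if_neg]
        intro hee
        apply h
        have := ee_eq.mp hee
        exact Subtype.ext (Prod.ext this.1.symm this.2.symm)
    rw [← hcsum, map_finsuppSum] at hφg
    rw [← hφg, Finsupp.sum]
    apply Submodule.sum_mem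
    intro t htc
    have htT : t ∈ T := hcsupp htc
    show φ (c t • t) ∈ Submodule.span K (⇑φ '' ↑T)
    have : φ (c t • t) = constantCoeff (c t) • φ t := by
      funext γ'
      simp only [hφ, LinearMap.pi_apply, lcoeff_apply, smul_eq_mul, Pi.smul_apply]
      exact coeff_key hanti (hTJ t htT) (c t) γ'.2
    rw [this]
    exact Submodule.smul_mem _ _ (Submodule.subset_span ⟨t, htT, rfl⟩)
  -- linear independence of the standard basis vectors
  have li : LinearIndependent K (fun γ : ↥(Gf : Set (ℕ × ℕ)) => Pi.single γ (1 : K)) := by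
    have : (fun γ : ↥(Gf : Set (ℕ × ℕ)) => Pi.single γ (1 : K))
        = ⇑(Pi.basisFun K ↥(Gf : Set (ℕ × ℕ))) := by
      funext γ; rw [Pi.basisFun_apply]
    rw [this]
    exact (Pi.basisFun K _).linearIndependent
  have hle := linearIndependent_le_span' _ li (↑(T.image φ) : Set (↥(Gf : Set (ℕ × ℕ)) → K)) ?_
  · have h1 : (Cardinal.mk ↥(Gf : Set (ℕ × ℕ))) = (Gf.card : Cardinal) := Cardinal.mk_coe_finset
    have h2 : Fintype.card (↑(T.image φ) : Set (↥(Gf : Set (ℕ × ℕ)) → K)) = (T.image φ).card := by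
      simp [Fintype.card_coe]
    rw [h1, h2] at hle
    have h3 : Gf.card ≤ (T.image φ).card := by exact_mod_cast hle
    exact le_trans h3 (Finset.card_image_le)
  · rintro _ ⟨γ, rfl⟩
    rw [Finset.coe_image]
    exact key γ

end LB
end P27

open Pointwise

/-- **Proposition 2.7.** Let `I ⊆ K[x,y]` be a convex monomial ideal of height 2 with
minimal monomial generators `u 1 > … > u m`, `u i = x^(a i) * y^(b i)`.  Then for all
`k ≥ 1`:
(a) `I^k = ∑_{i=1}^{m-1} (u i, u (i+1))^k`;
(b)(i) `G((u i, u (i+1))^k) = {u i^ℓ u (i+1)^(k-ℓ) : ℓ = 0, …, k}` (this set generates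
`(u i, u (i+1))^k` minimally);
(b)(ii) `G(I^k) = ⋃_{i=1}^{m-1} G((u i, u (i+1))^k)` (this union generates `I^k`
minimally);
(b)(iii) for `1 ≤ i < j ≤ m-1` the sets `G((u i, u (i+1))^k)` and `G((u j, u (j+1))^k)`
are disjoint if `j ≠ i+1`, and meet exactly in `{u (i+1) ^ k}` if `j = i+1`;
(c) `μ(I^k) = (m-1)k + 1` for all `k ≥ 0`. -/
theorem stmt_7 (K : Type) [Field K] (m : ℕ) (hm : 2 ≤ m) (a b : ℕ → ℕ)
    (hmono : ∀ i, 1 ≤ i → i + 1 ≤ m → a (i + 1) < a i ∧ b i < b (i + 1))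
    (ham : a m = 0) (hb1 : b 1 = 0)
    (hconv : ∀ i, 2 ≤ i → i + 1 ≤ m →
      2 * a i ≤ a (i - 1) + a (i + 1) ∧ 2 * b i ≤ b (i - 1) + b (i + 1))
    (I : Ideal (MvPolynomial (Fin 2) K))
    (hI : I = Ideal.span ((fun i => X 0 ^ a i * X 1 ^ b i) '' Set.Icc 1 m)) :
    (∀ k, 1 ≤ k →
      (I ^ k = ∑ i ∈ Finset.Icc 1 (m - 1),
          (Ideal.span {X 0 ^ a i * X 1 ^ b i, X 0 ^ a (i + 1) * X 1 ^ b (i + 1)}) ^ k) ∧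
      (∀ i, 1 ≤ i → i ≤ m - 1 →
        Ideal.span (pairPows K a b i k) =
          (Ideal.span {X 0 ^ a i * X 1 ^ b i, X 0 ^ a (i + 1) * X 1 ^ b (i + 1)}) ^ k ∧
        (∀ v ∈ pairPows K a b i k, v ∉ Ideal.span (pairPows K a b i k \ {v}))) ∧
      (Ideal.span (⋃ i ∈ Set.Icc 1 (m - 1), pairPows K a b i k) = I ^ k ∧
        (∀ v ∈ ⋃ i ∈ Set.Icc 1 (m - 1), pairPows K a b i k,
          v ∉ Ideal.span ((⋃ i ∈ Set.Icc 1 (m - 1), pairPows K a b i k) \ {v}))) ∧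
      (∀ i j, 1 ≤ i → i < j → j ≤ m - 1 →
        (j ≠ i + 1 → pairPows K a b i k ∩ pairPows K a b j k = ∅) ∧
        (j = i + 1 → pairPows K a b i k ∩ pairPows K a b j k =
          {(X 0 ^ a (i + 1) * X 1 ^ b (i + 1)) ^ k}))) ∧
    (∀ k, muGen (I ^ k) = (m - 1) * k + 1) := by
  classical
  ----------------------------------------------------------------
  -- arithmetic preliminaries
  ----------------------------------------------------------------
  have ha : ∀ d i, 1 ≤ i → i + d ≤ m → a (i + d) + d ≤ a i := by
    intro d
    induction d with
    | zero => intro i h1 h2; simp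
    | succ d ih =>
      intro i h1 h2
      have h3 := ih i h1 (by omega)
      have h4 := (hmono (i + d) (by omega) (by omega)).1
      show a ((i + d) + 1) + (d + 1) ≤ a i
      omega
  have hb : ∀ d i, 1 ≤ i → i + d ≤ m → b i + d ≤ b (i + d) := by
    intro d
    induction d with
    | zero => intro i h1 h2; simp
    | succ d ih =>
      intro i h1 h2
      have h3 := ih i h1 (by omega)
      have h4 := (hmono (i + d) (by omega) (by omega)).2
      show b i + (d + 1) ≤ b ((i + d) + 1)
      omega
  have haij : ∀ i j, 1 ≤ i → i ≤ j → j ≤ m → a j + (j - i) ≤ a i := by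
    intro i j h1 h2 h3
    have h4 := ha (j - i) i h1 (by omega)
    have h5 : i + (j - i) = j := by omega
    rw [h5] at h4
    omega
  have hbij : ∀ i j, 1 ≤ i → i ≤ j → j ≤ m → b i + (j - i) ≤ b j := by
    intro i j h1 h2 h3
    have h4 := hb (j - i) i h1 (by omega)
    have h5 : i + (j - i) = j := by omega
    rw [h5] at h4
    omega
  have hA' : ∀ d i, 1 ≤ i → i + d + 1 ≤ m → a (i + d) + a (i + 1) ≤ a i + a (i + d + 1) := by
    intro d
    induction d with
    | zero => intro i h1 h2; simp
    | succ d ih =>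
      intro i h1 h2
      have h3 := ih i h1 (by omega)
      have h4 := (hconv (i + d + 1) (by omega) (by omega)).1
      have h5 : i + d + 1 - 1 = i + d := by omega
      rw [h5] at h4
      show a ((i + d) + 1) + a (i + 1) ≤ a i + a ((i + d + 1) + 1)
      omega
  have hB' : ∀ d i, 1 ≤ i → i + d + 1 ≤ m → b (i + 1) + b (i + d) ≤ b i + b (i + d + 1) := by
    intro d
    induction d with
    | zero => intro i h1 h2; simp; omega
    | succ d ih =>
      intro i h1 h2
      have h3 := ih i h1 (by omega)
      have h4 := (hconv (i + d + 1) (by omega) (by omega)).2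
      have h5 : i + d + 1 - 1 = i + d := by omega
      rw [h5] at h4
      show b (i + 1) + b ((i + d) + 1) ≤ b i + b ((i + d + 1) + 1)
      omega
  have hcomp : ∀ i j, 1 ≤ i → i + 2 ≤ j → j ≤ m →
      a (i + 1) + a (j - 1) ≤ a i + a j ∧ b (i + 1) + b (j - 1) ≤ b i + b j := by
    intro i j h1 h2 h3
    have e1 : i + (j - 1 - i) = j - 1 := by omega
    have hA'' := hA' (j - 1 - i) i h1 (by omega)
    have hB'' := hB' (j - 1 - i) i h1 (by omega)
    rw [e1] at hA'' hB''
    have e2 : j - 1 + 1 = j := by omega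
    rw [e2] at hA'' hB''
    omega
  ----------------------------------------------------------------
  -- monomial form of I
  ----------------------------------------------------------------
  have hI' : I = Ideal.span ((fun i => P27.M K (a i) (b i)) '' Set.Icc 1 m) := by
    rw [hI]
    congr 1
    exact Set.image_congr fun i _ => P27.X_eq (a i) (b i)
  have hui : ∀ j, 1 ≤ j → j ≤ m → (X 0 ^ a j * X 1 ^ b j : MvPolynomial (Fin 2) K) ∈ I := by
    intro j h1 h2
    rw [hI]
    exact Ideal.subset_span ⟨j, ⟨h1, h2⟩, rfl⟩
  ----------------------------------------------------------------
  -- union of pairPows as a monomial set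
  ----------------------------------------------------------------
  have hUnion : ∀ k : ℕ, (⋃ i ∈ Set.Icc 1 (m - 1), pairPows K a b i k)
      = (fun pq : ℕ × ℕ => P27.M K pq.1 pq.2) '' (⋃ i ∈ Set.Icc 1 (m - 1), P27.Pset a b k i) := by
    intro k
    rw [Set.image_iUnion₂]
    exact Set.iUnion₂_congr fun i _ => P27.pairPows_eq a b i k
  -- the antichain property of the union exponent set
  have hanti : ∀ k, 1 ≤ k → ∀ pq ∈ (⋃ i ∈ Set.Icc 1 (m - 1), P27.Pset a b k i),
      ∀ rs ∈ (⋃ i ∈ Set.Icc 1 (m - 1), P27.Pset a b k i),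
      rs.1 ≤ pq.1 → rs.2 ≤ pq.2 → rs = pq := by
    intro k hk pq hpq rs hrs h1 h2
    simp only [Set.mem_iUnion, Set.mem_Icc, P27.Pset, Set.mem_setOf_eq] at hpq hrs
    obtain ⟨i, ⟨hi1, hi2⟩, l, hl, rfl⟩ := hpq
    obtain ⟨i', ⟨hi'1, hi'2⟩, l', hl', rfl⟩ := hrs
    simp only [P27.eP] at h1 h2 ⊢
    have := P27.master hm hmono haij hbij hk hi1 (by omega) hi'1 (by omega) hl hl' h1 h2
    obtain ⟨⟨e1, e2⟩, -⟩ := this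
    exact Prod.ext e1.symm e2.symm
  ----------------------------------------------------------------
  -- main span identity : span (union) = I ^ k   (k ≥ 1)
  ----------------------------------------------------------------
  have hMain : ∀ k, 1 ≤ k →
      Ideal.span (⋃ i ∈ Set.Icc 1 (m - 1), pairPows K a b i k) = I ^ k := by
    intro k hk
    apply le_antisymm
    · rw [Ideal.span_le]
      intro w hw
      simp only [Set.mem_iUnion, Set.mem_Icc] at hw
      obtain ⟨i, ⟨hi1, hi2⟩, l, hl, rfl⟩ := hw
      have h1 : (X 0 ^ a i * X 1 ^ b i : MvPolynomial (Fin 2) K) ^ l ∈ I ^ l :=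
        Ideal.pow_mem_pow (hui i hi1 (by omega)) l
      have h2 : (X 0 ^ a (i + 1) * X 1 ^ b (i + 1) : MvPolynomial (Fin 2) K) ^ (k - l)
          ∈ I ^ (k - l) :=
        Ideal.pow_mem_pow (hui (i + 1) (by omega) (by omega)) (k - l)
      have h3 := Ideal.mul_mem_mul h1 h2
      rwa [← pow_add, (by omega : l + (k - l) = k)] at h3
    · rw [hI']
      have hpow : (Ideal.span ((fun i => P27.M K (a i) (b i)) '' Set.Icc 1 m)) ^ k
          = Ideal.span (((fun i => P27.M K (a i) (b i)) '' Set.Icc 1 m) ^ k) := by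
        rw [← Ideal.submodule_span_eq, Submodule.span_pow, Ideal.submodule_span_eq]
      rw [hpow, Ideal.span_le]
      intro w hw
      rw [Set.mem_pow] at hw
      obtain ⟨f, hf⟩ := hw
      -- extract index function
      have hchoice : ∀ t : Fin k, ∃ i, (1 ≤ i ∧ i ≤ m) ∧ P27.M K (a i) (b i) = (f t : _) := by
        intro t
        obtain ⟨i, hi, he⟩ := (f t).2
        exact ⟨i, hi, he⟩
      choose g hg1 hg2 using hchoice
      have hprod : (w : MvPolynomial (Fin 2) K)
          = P27.M K (∑ t, a (g t)) (∑ t, b (g t)) := by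
        rw [← hf, List.prod_ofFn]
        rw [Finset.prod_congr rfl (fun t _ => (hg2 t).symm)]
        exact P27.prod_M Finset.univ (fun t => a (g t)) (fun t => b (g t))
      obtain ⟨j, l, hj1, hj2, hl, hA, hB⟩ :=
        P27.core hm ham hcomp hk (∑ t, (g t) ^ 2) g (fun t => hg1 t) (le_refl _)
      rw [hprod, SetLike.mem_coe, hUnion k, P27.M_mem_span_M]
      refine ⟨P27.eP a b k j l, ?_, ?_, ?_⟩
      · simp only [Set.mem_iUnion, Set.mem_Icc]
        exact ⟨j, ⟨hj1, by omega⟩, l, hl, rfl⟩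
      · simpa [P27.eP] using hA
      · simpa [P27.eP] using hB
  -- pair comparison helper
  have hPP : ∀ k, 1 ≤ k → ∀ i l i' l', 1 ≤ i → i + 1 ≤ m → 1 ≤ i' → i' + 1 ≤ m →
      l ≤ k → l' ≤ k → P27.eP a b k i l = P27.eP a b k i' l' →
      (i = i' ∧ l = l' ∨ (i' = i + 1 ∧ l = 0 ∧ l' = k) ∨ (i = i' + 1 ∧ l = k ∧ l' = 0)) := by
    intro k hk i l i' l' h1 h2 h3 h4 h5 h6 heq
    have hx : (P27.eP a b k i' l').1 ≤ (P27.eP a b k i l).1 :=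
      le_of_eq (congrArg Prod.fst heq).symm
    have hy : (P27.eP a b k i' l').2 ≤ (P27.eP a b k i l).2 :=
      le_of_eq (congrArg Prod.snd heq).symm
    simp only [P27.eP] at hx hy
    exact (P27.master hm hmono haij hbij hk h1 h2 h3 h4 h5 h6 hx hy).2
  have hpair_anti : ∀ k, 1 ≤ k → ∀ i, 1 ≤ i → i + 1 ≤ m →
      ∀ pq ∈ P27.Pset a b k i, ∀ rs ∈ P27.Pset a b k i,
      rs.1 ≤ pq.1 → rs.2 ≤ pq.2 → rs = pq := by
    intro k hk i h1 h2 pq hpq rs hrs hx hy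
    obtain ⟨l, hl, rfl⟩ := hpq
    obtain ⟨l', hl', rfl⟩ := hrs
    simp only [P27.eP] at hx hy ⊢
    obtain ⟨⟨e1, e2⟩, -⟩ := P27.master hm hmono haij hbij hk h1 h2 h1 h2 hl hl' hx hy
    exact Prod.ext e1.symm e2.symm
  constructor
  · intro k hk
    refine ⟨?_, ?_, ⟨hMain k hk, ?_⟩, ?_⟩
    · -- (a)
      calc I ^ k = Ideal.span (⋃ i ∈ Set.Icc 1 (m - 1), pairPows K a b i k) :=
            (hMain k hk).symm
        _ = ⨆ i ∈ Finset.Icc 1 (m - 1), Ideal.span (pairPows K a b i k) := by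
            rw [← Finset.coe_Icc, ← Ideal.submodule_span_eq, Submodule.span_iUnion₂]
            rfl
        _ = ∑ i ∈ Finset.Icc 1 (m - 1), Ideal.span (pairPows K a b i k) := by
            rw [Ideal.sum_eq_sup, Finset.sup_eq_iSup]
        _ = ∑ i ∈ Finset.Icc 1 (m - 1),
              (Ideal.span {X 0 ^ a i * X 1 ^ b i, X 0 ^ a (i + 1) * X 1 ^ b (i + 1)}) ^ k :=
            Finset.sum_congr rfl fun i _ => (P27.spanPair_pow a b i k).symm
    · -- (b)(i)
      intro i h1 h2
      refine ⟨(P27.spanPair_pow a b i k).symm, ?_⟩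
      intro v hv
      rw [P27.pairPows_eq] at hv ⊢
      exact P27.min_gen (hpair_anti k hk i h1 (by omega)) hv
    · -- (b)(ii) minimality
      intro v hv
      rw [hUnion k] at hv ⊢
      exact P27.min_gen (hanti k hk) hv
    · -- (b)(iii)
      intro i j h1 hij hj
      constructor
      · intro hne
        rw [P27.pairPows_eq, P27.pairPows_eq, ← Set.image_inter P27.M_inj]
        have hempty : P27.Pset a b k i ∩ P27.Pset a b k j = ∅ := by
          ext pq
          simp only [Set.mem_inter_iff, Set.mem_empty_iff_false, iff_false, not_and]
          rintro ⟨l, hl, rfl⟩ ⟨l', hl', heq⟩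
          have := hPP k hk i l j l' h1 (by omega) (by omega) (by omega) hl hl' heq
          omega
        rw [hempty, Set.image_empty]
      · rintro rfl
        rw [P27.pairPows_eq, P27.pairPows_eq, ← Set.image_inter P27.M_inj]
        have hPint : P27.Pset a b k i ∩ P27.Pset a b k (i + 1) = {P27.eP a b k i 0} := by
          ext pq
          simp only [Set.mem_inter_iff, Set.mem_singleton_iff]
          constructor
          · rintro ⟨⟨l, hl, rfl⟩, ⟨l', hl', heq⟩⟩
            have := hPP k hk i l (i + 1) l' h1 (by omega) (by omega) (by omega) hl hl' heq
            have hl0 : l = 0 := by omega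
            rw [hl0]
          · rintro rfl
            exact ⟨⟨0, Nat.zero_le k, rfl⟩, ⟨k, le_refl k, P27.eP_zero_eq a b k i⟩⟩
        rw [hPint, Set.image_singleton]
        have : P27.M K (P27.eP a b k i 0).1 (P27.eP a b k i 0).2
            = (X 0 ^ a (i + 1) * X 1 ^ b (i + 1) : MvPolynomial (Fin 2) K) ^ k := by
          rw [P27.X_eq, P27.M_pow, P27.M_eq_iff]
          constructor <;> simp [P27.eP]
        rw [this]
  · -- (c)
    intro k
    rcases Nat.eq_zero_or_pos k with rfl | hk
    · -- k = 0
      have h1 : I ^ 0 = ⊤ := by rw [pow_zero, Ideal.one_eq_top]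
      have mem1 : (1 : ℕ) ∈ {n : ℕ | ∃ T : Finset (MvPolynomial (Fin 2) K),
          T.card = n ∧ Ideal.span (T : Set (MvPolynomial (Fin 2) K)) = I ^ 0} := by
        refine ⟨{1}, Finset.card_singleton 1, ?_⟩
        rw [h1, Finset.coe_singleton, Ideal.span_singleton_one]
      have hlow : ∀ n ∈ {n : ℕ | ∃ T : Finset (MvPolynomial (Fin 2) K),
          T.card = n ∧ Ideal.span (T : Set (MvPolynomial (Fin 2) K)) = I ^ 0}, 1 ≤ n := by
        rintro n ⟨T, hcard, hspan⟩
        by_contra h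
        have hn0 : n = 0 := by omega
        subst hn0
        rw [Finset.card_eq_zero] at hcard
        subst hcard
        rw [Finset.coe_empty, Ideal.span_empty, h1] at hspan
        have h2 : (1 : MvPolynomial (Fin 2) K) ∈ (⊥ : Ideal (MvPolynomial (Fin 2) K)) := by
          rw [hspan]; trivial
        rw [Ideal.mem_bot] at h2
        exact one_ne_zero h2
      have : muGen (I ^ 0) = 1 := le_antisymm (Nat.sInf_le mem1) (le_csInf ⟨1, mem1⟩ hlow)
      rw [this]
      simp
    · -- k ≥ 1
      set Gfin : Finset (ℕ × ℕ) :=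
        ((Finset.Icc 1 (m - 1) ×ˢ Finset.Icc 1 k).image
          (fun p : ℕ × ℕ => P27.eP a b k p.1 p.2)) ∪ {P27.eP a b k (m - 1) 0} with hGfin
      have hGcoe : (Gfin : Set (ℕ × ℕ)) = ⋃ i ∈ Set.Icc 1 (m - 1), P27.Pset a b k i := by
        ext pq
        simp only [hGfin, Finset.coe_union, Finset.coe_image, Finset.coe_singleton,
          Set.mem_union, Set.mem_image, Finset.mem_coe, Finset.mem_product, Finset.mem_Icc,
          Set.mem_singleton_iff, Set.mem_iUnion, Set.mem_Icc, P27.Pset, Set.mem_setOf_eq]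
        constructor
        · rintro (⟨⟨i, l⟩, ⟨⟨hi1, hi2⟩, hl1, hl2⟩, rfl⟩ | rfl)
          · exact ⟨i, ⟨hi1, hi2⟩, l, hl2, rfl⟩
          · exact ⟨m - 1, ⟨by omega, le_refl _⟩, 0, by omega, rfl⟩
        · rintro ⟨i, ⟨hi1, hi2⟩, l, hl, rfl⟩
          rcases Nat.eq_zero_or_pos l with rfl | hpos
          · rcases eq_or_lt_of_le hi2 with hcase | hlt
            · right; rw [hcase]
            · left
              exact ⟨(i + 1, k), ⟨⟨by omega, by omega⟩, hk, le_refl k⟩,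
                (P27.eP_zero_eq a b k i).symm⟩
          · left; exact ⟨(i, l), ⟨⟨hi1, hi2⟩, hpos, hl⟩, rfl⟩
      have hinj : Set.InjOn (fun p : ℕ × ℕ => P27.eP a b k p.1 p.2)
          ↑(Finset.Icc 1 (m - 1) ×ˢ Finset.Icc 1 k) := by
        rintro ⟨i, l⟩ hmem ⟨i', l'⟩ hmem' heq
        simp only [Finset.coe_product, Finset.coe_Icc, Set.mem_prod, Set.mem_Icc] at hmem hmem'
        obtain ⟨⟨hi1, hi2⟩, hl1, hl2⟩ := hmem
        obtain ⟨⟨hi'1, hi'2⟩, hl'1, hl'2⟩ := hmem'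
        have := hPP k hk i l i' l' hi1 (by omega) hi'1 (by omega) hl2 hl'2 heq
        have h1 : i = i' ∧ l = l' := by omega
        exact Prod.ext h1.1 h1.2
      have hdisj : Disjoint
          ((Finset.Icc 1 (m - 1) ×ˢ Finset.Icc 1 k).image
            (fun p : ℕ × ℕ => P27.eP a b k p.1 p.2))
          ({P27.eP a b k (m - 1) 0} : Finset (ℕ × ℕ)) := by
        rw [Finset.disjoint_singleton_right]
        intro hmem
        rw [Finset.mem_image] at hmem
        obtain ⟨⟨i, l⟩, hmem, heq⟩ := hmem
        rw [Finset.mem_product, Finset.mem_Icc, Finset.mem_Icc] at hmem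
        obtain ⟨⟨hi1, hi2⟩, hl1, hl2⟩ := hmem
        have := hPP k hk i l (m - 1) 0 hi1 (by omega) (by omega) (by omega) hl2 (by omega) heq
        omega
      have hGcard : Gfin.card = (m - 1) * k + 1 := by
        rw [hGfin, Finset.card_union_of_disjoint hdisj, Finset.card_image_of_injOn hinj,
          Finset.card_product, Nat.card_Icc, Nat.card_Icc, Finset.card_singleton]
        simp
      set Tfin := Gfin.image (fun pq : ℕ × ℕ => P27.M K pq.1 pq.2) with hTfin
      have hTcard : Tfin.card = (m - 1) * k + 1 := by
        rw [hTfin, Finset.card_image_of_injective _ P27.M_inj, hGcard]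
      have hTspan : Ideal.span (Tfin : Set (MvPolynomial (Fin 2) K)) = I ^ k := by
        rw [hTfin, Finset.coe_image, hGcoe, ← hUnion k]
        exact hMain k hk
      have memN : ((m - 1) * k + 1) ∈ {n : ℕ | ∃ T : Finset (MvPolynomial (Fin 2) K),
          T.card = n ∧ Ideal.span (T : Set (MvPolynomial (Fin 2) K)) = I ^ k} :=
        ⟨Tfin, hTcard, hTspan⟩
      have hlowN : ∀ n ∈ {n : ℕ | ∃ T : Finset (MvPolynomial (Fin 2) K),
          T.card = n ∧ Ideal.span (T : Set (MvPolynomial (Fin 2) K)) = I ^ k},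
          (m - 1) * k + 1 ≤ n := by
        rintro n ⟨T, rfl, hspan⟩
        have hanti' : ∀ pq ∈ (Gfin : Set (ℕ × ℕ)), ∀ rs ∈ (Gfin : Set (ℕ × ℕ)),
            rs.1 ≤ pq.1 → rs.2 ≤ pq.2 → rs = pq := by
          rw [hGcoe]; exact hanti k hk
        have hT' : Ideal.span (T : Set (MvPolynomial (Fin 2) K)) = Ideal.span
            ((fun pq : ℕ × ℕ => P27.M K pq.1 pq.2) '' (Gfin : Set (ℕ × ℕ))) := by
          rw [hspan, ← hMain k hk, hUnion k, hGcoe]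
        have := P27.lower_bound Gfin hanti' T hT'
        omega
      exact le_antisymm (Nat.sInf_le memN) (le_csInf ⟨_, memN⟩ hlowN)
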